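/- arXiv:2011.10309 — 2 statements merged into one kernel-verified Lean document; each statement's English description precedes it below -/
import Mathlib

section
/- Let α > 0 and let ψ, M : ℝ → ℝ be twice differentiable functions with ψ(0) = 0 and M(0) = 1 that satisfy ψ(α z) M(z) = z M(z+1) for all real z. Set p := ψ'(0) and assume p > 0. Then 2 (α p)^{-2} ( -M'(0) + (α p)^{-1} M'(1) ) = ψ''(0) / (α p³). In particular, the asymptotic variance v² := 2 (α p)^{-2}( -M'(0) + (α p)^{-1} M'(1) ) equals σ²/(α p³) with σ² := ψ''(0). -/
/-! Differentiating the recurrence `ψ (α z) M z = z M (z + 1)` twice and evaluating at `z = 0`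
gives `α² ψ''(0) + 2 α p M'(0) = 2 M'(1)`, using `ψ 0 = 0` and `M 0 = 1`. Solving for `M'(1)`
turns `-M'(0) + (α p)⁻¹ M'(1)` into `α ψ''(0) / (2 p)`. -/

section

variable {𝕜 : Type*} [NontriviallyNormedField 𝕜] {f g : 𝕜 → 𝕜} {f' g' a c z : 𝕜}

theorem HasDerivAt.comp_mul_left_mul (hf : HasDerivAt f f' (a * z)) (hg : HasDerivAt g g' z) :
    HasDerivAt (fun z ↦ f (a * z) * g z) (a * f' * g z + f (a * z) * g') z :=
  ((hf.comp z ((hasDerivAt_id z).const_mul a)).mul hg).congr_deriv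
    (by rw [Function.comp_apply]; ring)

theorem HasDerivAt.id_mul_comp_add_const (hg : HasDerivAt g g' (z + c)) :
    HasDerivAt (fun z ↦ z * g (z + c)) (g (z + c) + z * g') z :=
  ((hasDerivAt_id z).mul (hg.comp_add_const z c)).congr_deriv (by simp)

end

section

variable {α : ℝ} {ψ M : ℝ → ℝ} (hrec : ∀ z : ℝ, ψ (α * z) * M z = z * M (z + 1))
include hrec

theorem deriv_recurrence (hψ : Differentiable ℝ ψ) (hM : Differentiable ℝ M) (z : ℝ) :
    α * deriv ψ (α * z) * M z + ψ (α * z) * deriv M z = M (z + 1) + z * deriv M (z + 1) := by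
  have hL := (hψ (α * z)).hasDerivAt.comp_mul_left_mul (hM z).hasDerivAt
  rw [funext hrec] at hL
  exact hL.unique (hM (z + 1)).hasDerivAt.id_mul_comp_add_const

theorem second_deriv_recurrence (hψ1 : Differentiable ℝ ψ) (hψ2 : Differentiable ℝ (deriv ψ))
    (hM1 : Differentiable ℝ M) (hM2 : Differentiable ℝ (deriv M)) (z : ℝ) :
    α ^ 2 * deriv (deriv ψ) (α * z) * M z + 2 * α * deriv ψ (α * z) * deriv M z
        + ψ (α * z) * deriv (deriv M) z
      = 2 * deriv M (z + 1) + z * deriv (deriv M) (z + 1) := by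
  have hL : HasDerivAt (fun z ↦ α * deriv ψ (α * z) * M z + ψ (α * z) * deriv M z) _ z :=
    (((hψ2 (α * z)).hasDerivAt.const_mul α).comp_mul_left_mul (hM1 z).hasDerivAt).add
      ((hψ1 (α * z)).hasDerivAt.comp_mul_left_mul (hM2 z).hasDerivAt)
  have hR : HasDerivAt (fun z ↦ M (z + 1) + z * deriv M (z + 1)) _ z :=
    ((hM1 (z + 1)).hasDerivAt.comp_add_const z 1).add
      (hM2 (z + 1)).hasDerivAt.id_mul_comp_add_const
  rw [funext (deriv_recurrence hrec hψ1 hM1)] at hL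
  linear_combination hL.unique hR

end

/-- If `ψ, M : ℝ → ℝ` are twice differentiable with `ψ 0 = 0`, `M 0 = 1`, satisfy the
recurrence `ψ (α z) * M z = z * M (z + 1)` for all `z`, where `α > 0`, and `p := ψ'(0) > 0`,
then the asymptotic variance `v² = 2 (α p)⁻² (-M'(0) + (α p)⁻¹ M'(1))` equals
`σ²/(α p³)` with `σ² = ψ''(0)`. -/
theorem clock_variance_formula
    (α : ℝ) (hα : 0 < α) (ψ M : ℝ → ℝ)
    (hψ1 : Differentiable ℝ ψ) (hψ2 : Differentiable ℝ (deriv ψ))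
    (hM1 : Differentiable ℝ M) (hM2 : Differentiable ℝ (deriv M))
    (hψ0 : ψ 0 = 0) (hM0 : M 0 = 1)
    (hrec : ∀ z : ℝ, ψ (α * z) * M z = z * M (z + 1))
    (p : ℝ) (hp : p = deriv ψ 0) (hppos : 0 < p) :
    2 * ((α * p) ^ 2)⁻¹ * (-(deriv M 0) + (α * p)⁻¹ * deriv M 1)
      = deriv (deriv ψ) 0 / (α * p ^ 3) := by
  have hrec₂ := second_deriv_recurrence hrec hψ1 hψ2 hM1 hM2 0
  simp only [mul_zero, zero_add, zero_mul, add_zero, hψ0, hM0, ← hp] at hrec₂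
  rw [show deriv M 1 = α ^ 2 * deriv (deriv ψ) 0 / 2 + α * p * deriv M 0 by linarith]
  field_simp
  ring
end

section
/- Let 2 < α < d and let m ∈ (2, min(α, 4)). Then ψ(m) = -2^α · (Γ((α - m)/2)/Γ(-m/2)) · (Γ((m + d)/2)/Γ((m + d - α)/2)) < 0; in particular Γ(-m/2) > 0 for such m, since -m/2 ∈ (-2,-1) where the real Gamma function is positive. -/
lemma gamma_pos_neg2_neg1 {x : ℝ} (h1 : -2 < x) (h2 : x < -1) : 0 < Real.Gamma x := by
  have hx0 : x ≠ 0 := by linarith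
  have hx1 : x + 1 ≠ 0 := by linarith
  have h := Real.Gamma_add_one hx0
  have h' := Real.Gamma_add_one hx1
  have hΓ2 : 0 < Real.Gamma (x + 1 + 1) := Real.Gamma_pos_of_pos (by linarith)
  have hprod : 0 < x * (x + 1) := mul_pos_of_neg_of_neg (by linarith) (by linarith)
  have : Real.Gamma (x + 1 + 1) = x * (x + 1) * Real.Gamma x := by
    rw [h', h]; ring
  nlinarith [this]

/-- For `2 < α < d` and `m ∈ (2, min α 4)`, the Laplace exponent of the hypergeometric
stable process satisfies `ψ(m) < 0`; in particular `Γ(-m/2) > 0` since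
`-m/2 ∈ (-2,-1)` where the real Gamma function is positive. -/
theorem hypergeometric_stable_negative
    (α d m : ℝ) (hα : 2 < α) (had : α < d) (hm : m ∈ Set.Ioo 2 (min α 4)) :
    -(2 : ℝ) ^ α * (Real.Gamma ((α - m) / 2) / Real.Gamma (-m / 2)) *
        (Real.Gamma ((m + d) / 2) / Real.Gamma ((m + d - α) / 2)) < 0 ∧
      0 < Real.Gamma (-m / 2) := by
  obtain ⟨hm2, hmlt⟩ := hm
  have hmα : m < α := lt_of_lt_of_le hmlt (min_le_left _ _)
  have hm4 : m < 4 := lt_of_lt_of_le hmlt (min_le_right _ _)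
  have hΓneg : 0 < Real.Gamma (-m / 2) :=
    gamma_pos_neg2_neg1 (by linarith) (by linarith)
  refine ⟨?_, hΓneg⟩
  have h1 : 0 < Real.Gamma ((α - m) / 2) := Real.Gamma_pos_of_pos (by linarith)
  have h2 : 0 < Real.Gamma ((m + d) / 2) := Real.Gamma_pos_of_pos (by linarith)
  have h3 : 0 < Real.Gamma ((m + d - α) / 2) := Real.Gamma_pos_of_pos (by linarith)
  have hpow : 0 < (2 : ℝ) ^ α := Real.rpow_pos_of_pos (by norm_num) _
  have := mul_pos (mul_pos hpow (div_pos h1 hΓneg)) (div_pos h2 h3)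
  nlinarith
end
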